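/- For every z ∈ R^n with ⟨z,z⟩ ≤ μ, the volume of the intersection of the translated unit cube z + [-1/2,1/2]^n with the closed ball of radius √(μ + n/4) centered at the origin is at least 1/2. -/
import Mathlib


open MeasureTheory

theorem stmt1 (n : ℕ) (hn : 1 ≤ n) (μ : ℝ) (hμ : 0 ≤ μ)
    (z : Fin n → ℝ) (hz : ∑ i, z i ^ 2 ≤ μ) :
    (1 / 2 : ENNReal) ≤
      volume {x : Fin n → ℝ |
        (∀ i, x i - z i ∈ Set.Icc (-(1/2) : ℝ) (1/2)) ∧ ∑ i, x i ^ 2 ≤ μ + n / 4} := by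
  set A : Set (Fin n → ℝ) :=
    {x | (∀ i, x i - z i ∈ Set.Icc (-(1/2):ℝ) (1/2)) ∧ ∑ i, x i ^ 2 ≤ μ + n / 4} with hA_def
  set C : Set (Fin n → ℝ) := Set.pi Set.univ (fun i => Set.Icc (z i - 1/2) (z i + 1/2)) with hC_def
  have hmeas : MeasurableSet A := by
    have h1 : MeasurableSet {x : Fin n → ℝ | ∀ i, x i - z i ∈ Set.Icc (-(1/2):ℝ) (1/2)} := by
      have he : {x : Fin n → ℝ | ∀ i, x i - z i ∈ Set.Icc (-(1/2):ℝ) (1/2)} = C := by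
        ext x
        simp only [Set.mem_setOf_eq, Set.mem_pi, Set.mem_univ, Set.mem_Icc, true_implies, hC_def]
        constructor <;> intro h i <;> exact ⟨by linarith [(h i).1], by linarith [(h i).2]⟩
      rw [he]
      exact MeasurableSet.univ_pi fun i => measurableSet_Icc
    have h2 : MeasurableSet {x : Fin n → ℝ | ∑ i, x i ^ 2 ≤ μ + n / 4} :=
      measurableSet_le (by fun_prop) measurable_const
    exact h1.inter h2
  have hvolC : volume C = 1 := by
    rw [hC_def, volume_pi_pi]
    have : ∀ i : Fin n, volume (Set.Icc (z i - 1/2) (z i + 1/2)) = 1 := by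
      intro i
      rw [Real.volume_Icc]
      norm_num
    simp only [this, Finset.prod_const, one_pow]
  set c : Fin n → ℝ := fun i => 2 * z i with hc_def
  have hmp : MeasurePreserving (fun x : Fin n → ℝ => c - x) volume volume :=
    Measure.measurePreserving_sub_left volume c
  have hsub : C ⊆ A ∪ (fun x => c - x) ⁻¹' A := by
    intro x hx
    have hcube : ∀ i, x i - z i ∈ Set.Icc (-(1/2):ℝ) (1/2) := by
      intro i
      have := hx i (Set.mem_univ i)
      simp only [Set.mem_Icc, hC_def] at this
      exact ⟨by linarith [this.1], by linarith [this.2]⟩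
    by_cases h : ∑ i, x i ^ 2 ≤ μ + n / 4
    · exact Or.inl ⟨hcube, h⟩
    · right
      refine ⟨?_, ?_⟩
      · intro i
        have h1 := (hcube i).1
        have h2 := (hcube i).2
        simp only [Pi.sub_apply, hc_def, Set.mem_Icc]
        constructor <;> linarith
      · have key : ∑ i, ((c - x) i) ^ 2
            = 2 * ∑ i, (x i - z i) ^ 2 + 2 * ∑ i, z i ^ 2 - ∑ i, x i ^ 2 := by
          simp only [Pi.sub_apply, hc_def, Finset.mul_sum, ← Finset.sum_add_distrib,
            ← Finset.sum_sub_distrib]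
          exact Finset.sum_congr rfl fun i _ => by ring
        have hsum1 : ∑ i, (x i - z i) ^ 2 ≤ (n : ℝ) * (1/4) := by
          calc ∑ i, (x i - z i) ^ 2 ≤ ∑ _i : Fin n, (1/4 : ℝ) :=
                Finset.sum_le_sum fun i _ => by nlinarith [(hcube i).1, (hcube i).2]
            _ = (n : ℝ) * (1/4) := by simp [Finset.sum_const]
        have hX := not_le.mp h
        show ∑ i, ((c - x) i) ^ 2 ≤ μ + n / 4
        rw [key]
        linarith
  have hle : volume C ≤ volume A + volume ((fun x => c - x) ⁻¹' A) :=
    le_trans (measure_mono hsub) (measure_union_le _ _)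
  rw [hmp.measure_preimage hmeas.nullMeasurableSet, hvolC] at hle
  have h2v : (1 : ENNReal) ≤ 2 * volume A := by
    rw [two_mul]; exact hle
  have hcancel : (2 * volume A) / 2 = volume A := by
    rw [mul_comm, mul_div_assoc, ENNReal.div_self (by norm_num) (by norm_num), mul_one]
  calc (1/2 : ENNReal) ≤ (2 * volume A) / 2 := ENNReal.div_le_div_right h2v 2
    _ = volume A := hcancel
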